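/- arXiv:1905.11489 — 2 statements merged into one kernel-verified Lean document; each statement's English description precedes it below -/
import Mathlib

section
/- For k, m ≥ 2, every element of POI_{k×m} has image of cardinality im for some 0 ≤ i ≤ k, so POI_{k×m}/J is a chain J_0 <_J J_1 <_J ... <_J J_k where J_i consists of the elements of rank (image size) im. -/
noncomputable section

namespace POIPaper

instance pequivMonoid (α : Type*) : Monoid (α ≃. α) where
  one := PEquiv.refl α
  mul f g := f.trans g
  mul_assoc := PEquiv.trans_assoc
  one_mul := PEquiv.refl_trans
  mul_one := PEquiv.trans_refl

/-- `f` is `P`-stable for the ordered partition of `Ω` given by the block-index map `ι`. -/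
def PStable {Ω : Type*} {k : ℕ} (ι : Ω → Fin k) (f : Ω ≃. Ω) : Prop :=
  ∀ x y : Ω, y ∈ f x →
    (∀ z, ι z = ι x → (f z).isSome) ∧
    (∀ z w, w ∈ f z → ι z = ι x → ι w = ι y) ∧
    (∀ w, ι w = ι y → ∃ z, ι z = ι x ∧ w ∈ f z)

/-- `f` is `P`-order preserving for the ordered partition given by `ι`. -/
def POrdPres {Ω : Type*} {k : ℕ} (ι : Ω → Fin k) (f : Ω ≃. Ω) : Prop :=
  ∀ x y x' y' : Ω, x' ∈ f x → y' ∈ f y → ι x ≤ ι y → ι x' ≤ ι y'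

/-- The set `POI(Ω,P)` of all `P`-stable and `P`-order preserving partial permutations. -/
def POISet {Ω : Type*} {k : ℕ} (ι : Ω → Fin k) : Set (Ω ≃. Ω) :=
  {f | PStable ι f ∧ POrdPres ι f}

/-- Block index map of the uniform interval partition of `{1,...,km}` into `k` blocks of size `m`. -/
def blk (k m : ℕ) (a : Fin (k * m)) : Fin k :=
  ⟨(a : ℕ) / m, by
    have ha := a.isLt
    rcases Nat.eq_zero_or_pos m with h | h
    · subst h; simp at ha
    · rw [Nat.div_lt_iff_lt_mul h]; omega⟩

/-- The monoid `POI_{k×m}` (as a subset of the monoid of partial permutations). -/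
def POIkm (k m : ℕ) : Set (Fin (k * m) ≃. Fin (k * m)) := POISet (blk k m)

/-- The cardinality of the image of a partial permutation. -/
def imCard {n : ℕ} (f : Fin n ≃. Fin n) : ℕ := Set.ncard {b | (f.symm b).isSome}

/-- The `J`-preorder of the monoid `POI_{k×m}`: `α ≤_J β` iff `α ∈ M β M`. -/
def leJ (k m : ℕ) (α β : Fin (k * m) ≃. Fin (k * m)) : Prop :=
  ∃ s ∈ POIkm k m, ∃ t ∈ POIkm k m, α = s * β * t

/-- Order preserving partial permutations of a chain. -/
def OrdPres {n : ℕ} (f : Fin n ≃. Fin n) : Prop :=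
  ∀ x y x' y' : Fin n, x' ∈ f x → y' ∈ f y → x ≤ y → x' ≤ y'

/-- The group of units of `POI_{k×m}`: elements with full domain and image. -/
def unitsSet (k m : ℕ) : Set (Fin (k * m) ≃. Fin (k * m)) :=
  {f | f ∈ POIkm k m ∧ (∀ a, (f a).isSome) ∧ (∀ b, (f.symm b).isSome)}



theorem mymul_def {α : Type*} (f g : α ≃. α) : f * g = f.trans g := rfl

section closure

variable {Ω : Type*} {k : ℕ} {ι : Ω → Fin k}

theorem PStable.compose {f g : Ω ≃. Ω} (hf : PStable ι f) (hg : PStable ι g) :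
    PStable ι (f.trans g) := by
  intro x y hxy
  obtain ⟨u, hu, huy⟩ := (f.mem_trans g x y).1 hxy
  obtain ⟨hf1, hf2, hf3⟩ := hf x u hu
  refine ⟨fun z hz => ?_, fun z w hw hz => ?_, fun w hw => ?_⟩
  · obtain ⟨u', hu'⟩ := Option.isSome_iff_exists.1 (hf1 z hz)
    have hu'm : u' ∈ f z := hu'
    obtain ⟨hg1, hg2, hg3⟩ := hg u y huy
    obtain ⟨w, hww⟩ := Option.isSome_iff_exists.1 (hg1 u' (hf2 z u' hu'm hz))
    exact Option.isSome_iff_exists.2 ⟨w, (f.mem_trans g z w).2 ⟨u', hu'm, hww⟩⟩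
  · obtain ⟨u', hu', hwu'⟩ := (f.mem_trans g z w).1 hw
    exact (hg u y huy).2.1 u' w hwu' (hf2 z u' hu' hz)
  · obtain ⟨v, hv, hwv⟩ := (hg u y huy).2.2 w hw
    obtain ⟨z, hz, hvz⟩ := hf3 v hv
    exact ⟨z, hz, (f.mem_trans g z w).2 ⟨v, hvz, hwv⟩⟩

theorem POrdPres.compose {f g : Ω ≃. Ω} (hf : POrdPres ι f) (hg : POrdPres ι g) :
    POrdPres ι (f.trans g) := by
  intro x y x' y' hx hy hxy
  obtain ⟨u, hu, hux⟩ := (f.mem_trans g x x').1 hx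
  obtain ⟨v, hv, hvy⟩ := (f.mem_trans g y y').1 hy
  exact hg u v x' y' hux hvy (hf x y u v hu hv hxy)

theorem POISet.mul {f g : Ω ≃. Ω} (hf : f ∈ POISet ι) (hg : g ∈ POISet ι) :
    f.trans g ∈ POISet ι :=
  ⟨hf.1.compose hg.1, hf.2.compose hg.2⟩

theorem POISet.symm {f : Ω ≃. Ω} (hf : f ∈ POISet ι) : f.symm ∈ POISet ι := by
  obtain ⟨hs, ho⟩ := hf
  constructor
  · intro x y hxy
    have hyx : x ∈ f y := f.mem_iff_mem.1 hxy
    obtain ⟨h1, h2, h3⟩ := hs y x hyx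
    refine ⟨fun z hz => ?_, fun z w hw hz => ?_, fun w hw => ?_⟩
    · obtain ⟨v, hv, hvz⟩ := h3 z hz
      exact Option.isSome_iff_exists.2 ⟨v, f.mem_iff_mem.2 hvz⟩
    · have hzw : z ∈ f w := f.mem_iff_mem.1 hw
      obtain ⟨_, _, h3'⟩ := hs w z hzw
      obtain ⟨v, hv, hxv⟩ := h3' x hz.symm
      have hvy : v = y := f.inj hxv hyx
      rw [← hv, hvy]
    · obtain ⟨z, hz⟩ := Option.isSome_iff_exists.1 (h1 w hw)
      have hzm : z ∈ f w := hz
      exact ⟨z, h2 w z hzm hw, f.mem_iff_mem.2 hzm⟩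
  · intro x y x' y' hx hy hxy
    have hx' : x ∈ f x' := f.mem_iff_mem.1 hx
    have hy' : y ∈ f y' := f.mem_iff_mem.1 hy
    by_contra hlt
    push_neg at hlt
    have h1 : ι y ≤ ι x := ho y' x' y x hy' hx' hlt.le
    have hxy' : ι x = ι y := le_antisymm hxy h1
    obtain ⟨_, _, h3⟩ := hs x' x hx'
    obtain ⟨z, hz, hyz⟩ := h3 y hxy'.symm
    have : z = y' := f.inj hyz hy'
    rw [this] at hz
    exact absurd hz (ne_of_lt hlt)

end closure


variable {k m : ℕ}

theorem mpos (a : Fin (k * m)) : 0 < m :=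
  Nat.pos_of_ne_zero fun h => absurd a.isLt (by subst h; simp)

def mk' (k m : ℕ) (c : Fin k) (r : ℕ) (hr : r < m) : Fin (k * m) :=
  ⟨(c : ℕ) * m + r, by
    have h1 : (c : ℕ) * m + r < ((c : ℕ) + 1) * m := by rw [add_mul, one_mul]; omega
    have h2 : ((c : ℕ) + 1) * m ≤ k * m := Nat.mul_le_mul_right m c.isLt
    omega⟩

theorem blk_mk' (c : Fin k) (r : ℕ) (hr : r < m) : blk k m (mk' k m c r hr) = c := by
  have hm : 0 < m := lt_of_le_of_lt (Nat.zero_le r) hr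
  apply Fin.ext
  show ((c : ℕ) * m + r) / m = c
  rw [mul_comm, Nat.mul_add_div hm, Nat.div_eq_of_lt hr, add_zero]

theorem mk'_mod (c : Fin k) (r : ℕ) (hr : r < m) : ((mk' k m c r hr : Fin (k * m)) : ℕ) % m = r := by
  show ((c : ℕ) * m + r) % m = r
  rw [add_comm, Nat.add_mul_mod_self_right, Nat.mod_eq_of_lt hr]

theorem mk'_self (a : Fin (k * m)) :
    mk' k m (blk k m a) ((a : ℕ) % m) (Nat.mod_lt _ (mpos a)) = a := by
  apply Fin.ext
  show ((a : ℕ) / m) * m + (a : ℕ) % m = a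
  rw [mul_comm]
  exact Nat.div_add_mod _ _

theorem mem_map_mk {o : Option (Fin k)} {a b : Fin (k * m)} {h : (a : ℕ) % m < m} :
    b ∈ o.map (fun c => mk' k m c ((a : ℕ) % m) h) ↔
      blk k m b ∈ o ∧ (b : ℕ) % m = (a : ℕ) % m := by
  constructor
  · intro hb
    obtain ⟨c, hc, rfl⟩ := Option.map_eq_some_iff.1 hb
    exact ⟨by rw [blk_mk']; exact hc, mk'_mod _ _ _⟩
  · rintro ⟨h1, h2⟩
    apply Option.map_eq_some_iff.2
    refine ⟨blk k m b, h1, ?_⟩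
    apply Fin.ext
    show ((b : ℕ) / m) * m + (a : ℕ) % m = (b : ℕ)
    rw [← h2, mul_comm]
    exact Nat.div_add_mod _ _

/-- lift of a block-level partial permutation -/
def lift (k m : ℕ) (φ : Fin k ≃. Fin k) : Fin (k * m) ≃. Fin (k * m) where
  toFun a := (φ (blk k m a)).map fun c => mk' k m c ((a : ℕ) % m) (Nat.mod_lt _ (mpos a))
  invFun b := (φ.symm (blk k m b)).map fun c => mk' k m c ((b : ℕ) % m) (Nat.mod_lt _ (mpos b))
  inv a b := by
    rw [← Option.mem_def, ← Option.mem_def, mem_map_mk, mem_map_mk, φ.mem_iff_mem]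
    exact ⟨fun ⟨h1, h2⟩ => ⟨h1, h2.symm⟩, fun ⟨h1, h2⟩ => ⟨h1, h2.symm⟩⟩

theorem mem_lift {φ : Fin k ≃. Fin k} {a b : Fin (k * m)} :
    b ∈ lift k m φ a ↔ blk k m b ∈ φ (blk k m a) ∧ (b : ℕ) % m = (a : ℕ) % m :=
  mem_map_mk

theorem lift_symm (φ : Fin k ≃. Fin k) : (lift k m φ).symm = lift k m φ.symm :=
  PEquiv.ext fun _ => rfl

theorem isSome_lift {φ : Fin k ≃. Fin k} {a : Fin (k * m)} :
    (lift k m φ a).isSome ↔ (φ (blk k m a)).isSome := by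
  show (Option.map _ _).isSome ↔ _
  cases φ (blk k m a) <;> simp


theorem ncard_preimage (T : Set (Fin k)) (hm : 0 < m) :
    (blk k m ⁻¹' T).ncard = T.ncard * m := by
  have e : (blk k m ⁻¹' T) ≃ T × Fin m :=
    { toFun := fun a => (⟨blk k m a.1, a.2⟩, ⟨(a.1 : ℕ) % m, Nat.mod_lt _ hm⟩)
      invFun := fun p => ⟨mk' k m p.1.1 p.2.1 p.2.2, by
        show blk k m _ ∈ T
        rw [blk_mk' p.1.1 p.2.1 p.2.2]; exact p.1.2⟩
      left_inv := fun a => Subtype.ext (by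
        apply Fin.ext
        show ((a.1 : ℕ) / m) * m + (a.1 : ℕ) % m = (a.1 : ℕ)
        rw [mul_comm]; exact Nat.div_add_mod _ _)
      right_inv := fun p => by
        refine Prod.ext (Subtype.ext ?_) (Fin.ext ?_)
        · exact blk_mk' p.1.1 p.2.1 p.2.2
        · exact mk'_mod p.1.1 p.2.1 p.2.2 }
  rw [← Nat.card_coe_set_eq, Nat.card_congr e, Nat.card_prod,
    Nat.card_coe_set_eq, Nat.card_eq_fintype_card, Fintype.card_fin]

theorem ncard_dom_le_im {n : ℕ} (f : Fin n ≃. Fin n) :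
    {a | (f a).isSome}.ncard ≤ {b | (f.symm b).isSome}.ncard := by
  apply Set.ncard_le_ncard_of_injOn (fun a => (f a).getD a)
  · intro a ha
    obtain ⟨b, hb⟩ := Option.isSome_iff_exists.1 ha
    show (f.symm ((f a).getD a)).isSome
    rw [hb]
    show (f.symm b).isSome
    rw [f.eq_some_iff.2 hb]
    rfl
  · intro a ha a' ha' hh
    obtain ⟨b, hb⟩ := Option.isSome_iff_exists.1 ha
    obtain ⟨b', hb'⟩ := Option.isSome_iff_exists.1 ha'
    have hh' : b = b' := by simpa [hb, hb'] using hh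
    subst hh'
    exact f.inj (Option.mem_def.2 hb) (Option.mem_def.2 hb')

theorem ncard_dom_eq_im {n : ℕ} (f : Fin n ≃. Fin n) :
    {a | (f a).isSome}.ncard = {b | (f.symm b).isSome}.ncard :=
  le_antisymm (ncard_dom_le_im f) (by simpa using ncard_dom_le_im f.symm)


section poiAux

variable {k m : ℕ}

theorem isSome_lift_symm {φ : Fin k ≃. Fin k} {b : Fin (k * m)} :
    ((lift k m φ).symm b).isSome ↔ (φ.symm (blk k m b)).isSome := by
  rw [lift_symm]; exact isSome_lift

/-- a block-level partial permutation is monotone -/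
def MonoP {k : ℕ} (φ : Fin k ≃. Fin k) : Prop :=
  ∀ x y x' y' : Fin k, x' ∈ φ x → y' ∈ φ y → x ≤ y → x' ≤ y'

theorem lift_mem_POIkm {φ : Fin k ≃. Fin k} (hφ : MonoP φ) : lift k m φ ∈ POIkm k m := by
  constructor
  · intro x y hxy
    obtain ⟨hb, hmod⟩ := mem_lift.1 hxy
    refine ⟨fun z hz => ?_, fun z w hw hz => ?_, fun w hw => ?_⟩
    · rw [isSome_lift, hz]
      exact Option.isSome_iff_exists.2 ⟨blk k m y, hb⟩
    · obtain ⟨hb', _⟩ := mem_lift.1 hw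
      rw [hz] at hb'
      have h1 : φ (blk k m x) = some (blk k m y) := Option.mem_def.1 hb
      have h2 : φ (blk k m x) = some (blk k m w) := Option.mem_def.1 hb'
      exact (Option.some_inj.1 (h1.symm.trans h2)).symm
    · refine ⟨mk' k m (blk k m x) ((w : ℕ) % m) (Nat.mod_lt _ (mpos w)), blk_mk' _ _ _, ?_⟩
      apply mem_lift.2
      constructor
      · rw [blk_mk', hw]; exact hb
      · rw [mk'_mod]
  · intro x y x' y' hx hy hxy
    obtain ⟨hbx, _⟩ := mem_lift.1 hx
    obtain ⟨hby, _⟩ := mem_lift.1 hy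
    exact hφ _ _ _ _ hbx hby hxy

theorem imCard_lift {φ : Fin k ≃. Fin k} (hm : 0 < m) :
    imCard (lift k m φ) = {c | (φ.symm c).isSome}.ncard * m := by
  have hset : {b | ((lift k m φ).symm b).isSome} = blk k m ⁻¹' {c | (φ.symm c).isSome} := by
    ext b
    exact isSome_lift_symm
  rw [imCard, hset, ncard_preimage _ hm]

/-- identity restricted to the first `i` blocks -/
def idr (k i : ℕ) : Fin k ≃. Fin k where
  toFun c := if (c : ℕ) < i then some c else none
  invFun c := if (c : ℕ) < i then some c else none
  inv a b := by
    by_cases ha : (a : ℕ) < i <;> by_cases hb : (b : ℕ) < i <;>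
      simp_all [Option.mem_def, eq_comm] <;> omega

theorem monoP_idr : MonoP (idr k i) := by
  intro x y x' y' hx hy hxy
  have hx' : x' = x := by
    by_cases h : (x : ℕ) < i <;> simp_all [idr, Option.mem_def]
  have hy' : y' = y := by
    by_cases h : (y : ℕ) < i <;> simp_all [idr, Option.mem_def]
  rw [hx', hy']; exact hxy

theorem ncard_lt_fin (i : ℕ) (hik : i ≤ k) : {c : Fin k | (c : ℕ) < i}.ncard = i := by
  have e : {c : Fin k | (c : ℕ) < i} ≃ Fin i :=
    { toFun := fun c => ⟨(c.1 : ℕ), c.2⟩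
      invFun := fun j => ⟨⟨(j : ℕ), lt_of_lt_of_le j.isLt hik⟩, j.isLt⟩
      left_inv := fun c => Subtype.ext (Fin.ext rfl)
      right_inv := fun j => Fin.ext rfl }
  rw [← Nat.card_coe_set_eq, Nat.card_congr e, Nat.card_eq_fintype_card, Fintype.card_fin]

theorem dom_eq_preimage {α : Fin (k * m) ≃. Fin (k * m)} (hα : α ∈ POIkm k m) :
    {a | (α a).isSome} = blk k m ⁻¹' (blk k m '' {a | (α a).isSome}) := by
  apply subset_antisymm (Set.subset_preimage_image _ _)
  rintro a ⟨a₀, ha₀, haa⟩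
  obtain ⟨b₀, hb₀⟩ := Option.isSome_iff_exists.1 ha₀
  obtain ⟨h1, _, _⟩ := hα.1 a₀ b₀ (Option.mem_def.2 hb₀)
  exact h1 a haa.symm

theorem im_eq_preimage {α : Fin (k * m) ≃. Fin (k * m)} (hα : α ∈ POIkm k m) :
    {b | (α.symm b).isSome} = blk k m ⁻¹' (blk k m '' {b | (α.symm b).isSome}) := by
  apply subset_antisymm (Set.subset_preimage_image _ _)
  rintro b ⟨b₀, hb₀, hbb⟩
  obtain ⟨a₀, ha₀⟩ := Option.isSome_iff_exists.1 hb₀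
  have hmem : b₀ ∈ α a₀ := Option.mem_def.2 (α.eq_some_iff.1 ha₀)
  obtain ⟨_, _, h3⟩ := hα.1 a₀ b₀ hmem
  obtain ⟨z, _, hbz⟩ := h3 b hbb.symm
  exact Option.isSome_iff_exists.2 ⟨z, α.eq_some_iff.2 (Option.mem_def.1 hbz)⟩

theorem imCard_eq_blocks {α : Fin (k * m) ≃. Fin (k * m)} (hα : α ∈ POIkm k m) (hm : 0 < m) :
    imCard α = (blk k m '' {b | (α.symm b).isSome}).ncard * m := by
  rw [imCard]
  nth_rewrite 1 [im_eq_preimage hα]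
  rw [ncard_preimage _ hm]

theorem domCard_eq_blocks {α : Fin (k * m) ≃. Fin (k * m)} (hα : α ∈ POIkm k m) (hm : 0 < m) :
    imCard α = (blk k m '' {a | (α a).isSome}).ncard * m := by
  rw [imCard, ← ncard_dom_eq_im]
  nth_rewrite 1 [dom_eq_preimage hα]
  rw [ncard_preimage _ hm]

theorem imCard_trans_le_right {n : ℕ} (f g : Fin n ≃. Fin n) :
    imCard (f.trans g) ≤ imCard g := by
  apply Set.ncard_le_ncard
  · intro b hb
    rw [Set.mem_setOf_eq, PEquiv.symm_trans_rev] at hb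
    obtain ⟨a, ha⟩ := Option.isSome_iff_exists.1 hb
    obtain ⟨c, hc, _⟩ := Option.bind_eq_some_iff.1 ha
    exact Option.isSome_iff_exists.2 ⟨c, hc⟩
  · exact Set.toFinite _

theorem imCard_trans_le_left {n : ℕ} (f g : Fin n ≃. Fin n) :
    imCard (f.trans g) ≤ imCard f := by
  apply Set.ncard_le_ncard_of_injOn (fun b => (g.symm b).getD b)
  · intro b hb
    rw [Set.mem_setOf_eq, PEquiv.symm_trans_rev] at hb
    obtain ⟨a, ha⟩ := Option.isSome_iff_exists.1 hb
    obtain ⟨c, hc, hca⟩ := Option.bind_eq_some_iff.1 ha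
    show (f.symm ((g.symm b).getD b)).isSome
    rw [hc]
    exact Option.isSome_iff_exists.2 ⟨a, hca⟩
  · intro b hb b' hb' hh
    rw [Set.mem_setOf_eq, PEquiv.symm_trans_rev] at hb hb'
    obtain ⟨a, ha⟩ := Option.isSome_iff_exists.1 hb
    obtain ⟨c, hc, _⟩ := Option.bind_eq_some_iff.1 ha
    obtain ⟨a', ha'⟩ := Option.isSome_iff_exists.1 hb'
    obtain ⟨c', hc', _⟩ := Option.bind_eq_some_iff.1 ha'
    have hcc : c = c' := by simpa [hc, hc'] using hh
    subst hcc
    exact g.symm.inj (Option.mem_def.2 hc) (Option.mem_def.2 hc')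

theorem imCard_le_of_leJ {α β : Fin (k * m) ≃. Fin (k * m)} (h : leJ k m α β) :
    imCard α ≤ imCard β := by
  obtain ⟨s, _, t, _, heq⟩ := h
  have : α = (s.trans β).trans t := heq
  rw [this]
  exact le_trans (imCard_trans_le_left _ _) (imCard_trans_le_right _ _)

/-- existence of a monotone block-level partial permutation with given domain
mapping into a given set -/
theorem exists_monoP {k : ℕ} (D D' : Set (Fin k)) (h : D.ncard ≤ D'.ncard) :
    ∃ φ : Fin k ≃. Fin k, (∀ c, (φ c).isSome ↔ c ∈ D) ∧
      (∀ c c', c' ∈ φ c → c' ∈ D') ∧ MonoP φ := by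
  classical
  have hcard : D.toFinset.card ≤ D'.toFinset.card := by
    rwa [Set.ncard_eq_toFinset_card' D, Set.ncard_eq_toFinset_card' D'] at h
  let e := D.toFinset.orderIsoOfFin rfl
  let e' := D'.toFinset.orderIsoOfFin rfl
  let F : Fin k → Option (Fin k) := fun c =>
    if hc : c ∈ D.toFinset then some ↑(e' (Fin.castLE hcard (e.symm ⟨c, hc⟩))) else none
  let G : Fin k → Option (Fin k) := fun c' =>
    if hc : c' ∈ D'.toFinset then
      if h2 : ((e'.symm ⟨c', hc⟩ : Fin D'.toFinset.card) : ℕ) < D.toFinset.card then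
        some ↑(e ⟨_, h2⟩) else none
    else none
  have hF : ∀ a b, F a = some b ↔
      ∃ ha : a ∈ D.toFinset, b = ↑(e' (Fin.castLE hcard (e.symm ⟨a, ha⟩))) := by
    intro a b
    constructor
    · intro hab
      by_cases ha : a ∈ D.toFinset
      · refine ⟨ha, ?_⟩
        simp only [F] at hab
        rw [dif_pos ha, Option.some_inj] at hab
        exact hab.symm
      · simp only [F] at hab
        rw [dif_neg ha] at hab
        exact absurd hab (by simp)
    · rintro ⟨ha, rfl⟩
      simp only [F]
      rw [dif_pos ha]
  have hG : ∀ a b, G b = some a ↔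
      ∃ (hb : b ∈ D'.toFinset)
        (h2 : ((e'.symm ⟨b, hb⟩ : Fin D'.toFinset.card) : ℕ) < D.toFinset.card),
        a = ↑(e ⟨_, h2⟩) := by
    intro a b
    constructor
    · intro hab
      by_cases hb : b ∈ D'.toFinset
      · by_cases h2 : ((e'.symm ⟨b, hb⟩ : Fin D'.toFinset.card) : ℕ) < D.toFinset.card
        · refine ⟨hb, h2, ?_⟩
          simp only [G] at hab
          rw [dif_pos hb, dif_pos h2, Option.some_inj] at hab
          exact hab.symm
        · simp only [G] at hab
          rw [dif_pos hb, dif_neg h2] at hab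
          exact absurd hab (by simp)
      · simp only [G] at hab
        rw [dif_neg hb] at hab
        exact absurd hab (by simp)
    · rintro ⟨hb, h2, rfl⟩
      simp only [G]
      rw [dif_pos hb, dif_pos h2]
  have hinv : ∀ (a b : Fin k), a ∈ G b ↔ b ∈ F a := by
    intro a b
    rw [Option.mem_def, Option.mem_def, hF, hG]
    constructor
    · rintro ⟨hb, h2, rfl⟩
      have ha : ↑(e ⟨_, h2⟩) ∈ D.toFinset := (e ⟨_, h2⟩).2
      refine ⟨ha, ?_⟩
      have h3 : (⟨↑(e ⟨_, h2⟩), ha⟩ : {x // x ∈ D.toFinset}) = e ⟨_, h2⟩ :=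
        Subtype.ext rfl
      rw [h3, e.symm_apply_apply]
      have h4 : Fin.castLE hcard ⟨((e'.symm ⟨b, hb⟩ : Fin D'.toFinset.card) : ℕ), h2⟩
          = e'.symm ⟨b, hb⟩ := Fin.ext rfl
      rw [h4, e'.apply_symm_apply]
    · rintro ⟨ha, rfl⟩
      have hb : ↑(e' (Fin.castLE hcard (e.symm ⟨a, ha⟩))) ∈ D'.toFinset :=
        (e' (Fin.castLE hcard (e.symm ⟨a, ha⟩))).2
      have key : e'.symm ⟨↑(e' (Fin.castLE hcard (e.symm ⟨a, ha⟩))), hb⟩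
          = Fin.castLE hcard (e.symm ⟨a, ha⟩) := by
        rw [show (⟨↑(e' (Fin.castLE hcard (e.symm ⟨a, ha⟩))), hb⟩ : {x // x ∈ D'.toFinset})
            = e' (Fin.castLE hcard (e.symm ⟨a, ha⟩)) from Subtype.ext rfl,
          e'.symm_apply_apply]
      have h2 : ((e'.symm ⟨↑(e' (Fin.castLE hcard (e.symm ⟨a, ha⟩))), hb⟩ :
          Fin D'.toFinset.card) : ℕ) < D.toFinset.card := by
        rw [key]; exact (e.symm ⟨a, ha⟩).isLt
      refine ⟨hb, h2, ?_⟩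
      have h3 : (⟨((e'.symm ⟨↑(e' (Fin.castLE hcard (e.symm ⟨a, ha⟩))), hb⟩ :
          Fin D'.toFinset.card) : ℕ), h2⟩ : Fin D.toFinset.card) = e.symm ⟨a, ha⟩ := by
        apply Fin.ext
        show ((e'.symm ⟨_, hb⟩ : Fin D'.toFinset.card) : ℕ) = _
        rw [key]
        rfl
      rw [h3, e.apply_symm_apply]
  refine ⟨⟨F, G, hinv⟩, fun c => ?_, fun c c' hcc => ?_, ?_⟩
  · constructor
    · intro hsome
      by_cases hc : c ∈ D.toFinset
      · exact Set.mem_toFinset.1 hc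
      · rw [show (⟨F, G, hinv⟩ : Fin k ≃. Fin k) c = F c from rfl] at hsome
        simp only [F] at hsome
        rw [dif_neg hc] at hsome
        simp at hsome
    · intro hc
      rw [show (⟨F, G, hinv⟩ : Fin k ≃. Fin k) c = F c from rfl]
      simp only [F]
      rw [dif_pos (Set.mem_toFinset.2 hc)]
      rfl
  · obtain ⟨ha, rfl⟩ := (hF c c').1 (Option.mem_def.1 hcc)
    exact Set.mem_toFinset.1 (e' _).2
  · intro x y x' y' hx hy hxy
    obtain ⟨hxs, rfl⟩ := (hF x x').1 (Option.mem_def.1 hx)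
    obtain ⟨hys, rfl⟩ := (hF y y').1 (Option.mem_def.1 hy)
    have h1 : (⟨x, hxs⟩ : {x // x ∈ D.toFinset}) ≤ ⟨y, hys⟩ := Subtype.mk_le_mk.2 hxy
    have h2 : e.symm ⟨x, hxs⟩ ≤ e.symm ⟨y, hys⟩ := e.symm.le_iff_le.2 h1
    have h3 : Fin.castLE hcard (e.symm ⟨x, hxs⟩) ≤ Fin.castLE hcard (e.symm ⟨y, hys⟩) := by
      rw [Fin.le_def] at h2 ⊢
      exact h2
    exact Subtype.coe_le_coe.2 (e'.le_iff_le.2 h3)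

end poiAux

/-- for `k, m ≥ 2`, every element of `POI_{k×m}` has image of cardinality `i·m`
for some `0 ≤ i ≤ k`, each such rank occurs, and the corresponding `J`-classes form a chain
`J_0 <_J J_1 <_J ⋯ <_J J_k`. -/
theorem stmt6 (k m : ℕ) (hk : 2 ≤ k) (hm : 2 ≤ m) :
    (∀ α ∈ POIkm k m, ∃ i ≤ k, imCard α = i * m) ∧
    (∀ i ≤ k, ∃ α ∈ POIkm k m, imCard α = i * m) ∧
    (∀ α ∈ POIkm k m, ∀ β ∈ POIkm k m,
      imCard α < imCard β → leJ k m α β ∧ ¬ leJ k m β α) := by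
  have hm0 : 0 < m := by omega
  refine ⟨?_, ?_, ?_⟩
  · intro α hα
    refine ⟨(blk k m '' {b | (α.symm b).isSome}).ncard, ?_, imCard_eq_blocks hα hm0⟩
    calc (blk k m '' {b | (α.symm b).isSome}).ncard
        ≤ (Set.univ : Set (Fin k)).ncard :=
          Set.ncard_le_ncard (Set.subset_univ _) (Set.toFinite _)
      _ = k := by rw [Set.ncard_univ, Nat.card_eq_fintype_card, Fintype.card_fin]
  · intro i hi
    refine ⟨lift k m (idr k i), lift_mem_POIkm monoP_idr, ?_⟩
    rw [imCard_lift hm0]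
    have hseteq : {c : Fin k | ((idr k i).symm c).isSome} = {c : Fin k | (c : ℕ) < i} := by
      ext c
      show (if (c : ℕ) < i then some c else none).isSome ↔ _
      by_cases h : (c : ℕ) < i <;> simp [h]
    rw [hseteq, ncard_lt_fin i hi]
  · intro α hα β hβ hlt
    constructor
    · have hle : (blk k m '' {a | (α a).isSome}).ncard ≤
          (blk k m '' {a | (β a).isSome}).ncard := by
        have h1 := domCard_eq_blocks hα hm0
        have h2 := domCard_eq_blocks hβ hm0
        have h3 := hlt
        rw [h1, h2] at h3
        exact le_of_lt (Nat.lt_of_mul_lt_mul_right h3)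
      obtain ⟨φ, hφ1, hφ2, hφ3⟩ := exists_monoP (blk k m '' {a | (α a).isSome})
        (blk k m '' {a | (β a).isSome}) hle
      set s := lift k m φ with hs
      have hsmem : s ∈ POIkm k m := lift_mem_POIkm hφ3
      have hdom : ∀ x : Fin (k * m), (α x).isSome → ((s.trans β) x).isSome := by
        intro x hx
        have hblk : blk k m x ∈ blk k m '' {a | (α a).isSome} := ⟨x, hx, rfl⟩
        obtain ⟨c, hc⟩ := Option.isSome_iff_exists.1 ((hφ1 _).2 hblk)
        have hsx : mk' k m c ((x : ℕ) % m) (Nat.mod_lt _ hm0) ∈ s x :=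
          mem_lift.2 ⟨by rw [blk_mk']; exact Option.mem_def.2 hc, by rw [mk'_mod]⟩
        obtain ⟨a₀, ha₀, hca⟩ := hφ2 _ _ (Option.mem_def.2 hc)
        obtain ⟨b₀, hb₀⟩ := Option.isSome_iff_exists.1 ha₀
        obtain ⟨h1, _, _⟩ := hβ.1 a₀ b₀ (Option.mem_def.2 hb₀)
        have hβu : (β (mk' k m c ((x : ℕ) % m) (Nat.mod_lt _ hm0))).isSome := by
          apply h1
          rw [blk_mk']
          exact hca.symm
        obtain ⟨w, hw⟩ := Option.isSome_iff_exists.1 hβu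
        exact Option.isSome_iff_exists.2
          ⟨w, (s.mem_trans β x w).2 ⟨_, hsx, Option.mem_def.2 hw⟩⟩
      refine ⟨s, hsmem, (s.trans β).symm.trans α,
        POISet.mul (POISet.symm (POISet.mul hsmem hβ)) hα, ?_⟩
      have hmul : s * β * ((s.trans β).symm.trans α)
          = (s.trans β).trans ((s.trans β).symm.trans α) := rfl
      rw [hmul]
      apply PEquiv.ext
      intro a
      cases hFa : (s.trans β) a with
      | none =>
        have hαa : α a = none := by
          cases hαa : α a with
          | none => rfl
          | some b =>
            have hthis := hdom a (by rw [hαa]; rfl)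
            rw [hFa] at hthis
            simp at hthis
        rw [hαa]
        show none = ((s.trans β) a).bind _
        rw [hFa]
        rfl
      | some y =>
        show α a = ((s.trans β) a).bind _
        rw [hFa]
        show α a = ((s.trans β).symm y).bind α
        rw [(s.trans β).eq_some_iff.2 hFa]
        rfl
    · intro hcon
      exact absurd hlt (not_lt.2 (imCard_le_of_leJ hcon))

end POIPaper
end
end

section
/- For k, m ≥ 2, the J-class J_t of elements of POI_{k×m} of rank tm has exactly binom(k,t)² · (m!)^t elements, for each 0 ≤ t ≤ k. -/
/-!
A `P`-stable partial permutation maps each block of its domain bijectively onto a block of its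
image, so it induces a bijection from its set `S` of domain blocks onto its set `T` of image
blocks; `P`-order preservation makes this bijection strictly monotone, so it is the unique order
isomorphism `S ≃o T`. An element of rank `t·m` is therefore determined by the two `t`-subsets
`S, T` of the `k` blocks and one permutation of `Fin m` for each of the `t` domain blocks, and
every such triple occurs: hence `C(k,t)² (m!)^t` elements.
-/

noncomputable section

namespace POIPaper

section BlockCoordinates

variable {k m : ℕ}

-- `blk k m` is definitionally the first coordinate of `finProdFinEquiv.symm`.
def pack (i : Fin k) (r : Fin m) : Fin (k * m) := finProdFinEquiv (i, r)

def res (a : Fin (k * m)) : Fin m := a.modNat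

@[simp] lemma blk_pack (i : Fin k) (r : Fin m) : blk k m (pack i r) = i :=
  congrArg Prod.fst (finProdFinEquiv.symm_apply_apply (i, r))

@[simp] lemma res_pack (i : Fin k) (r : Fin m) : res (pack i r) = r :=
  congrArg Prod.snd (finProdFinEquiv.symm_apply_apply (i, r))

@[simp] lemma pack_blk_res (a : Fin (k * m)) : pack (blk k m a) (res a) = a :=
  finProdFinEquiv.apply_symm_apply a

lemma pack_injective {i i' : Fin k} {r r' : Fin m} (h : pack i r = pack i' r') :
    i = i' ∧ r = r' :=
  Prod.ext_iff.1 (finProdFinEquiv.injective h)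

lemma ncard_setOf_blk_mem (T : Finset (Fin k)) :
    {a : Fin (k * m) | blk k m a ∈ T}.ncard = T.card * m := by
  have hset : {a : Fin (k * m) | blk k m a ∈ T} =
      finProdFinEquiv '' ((T : Set (Fin k)) ×ˢ Set.univ) := by
    ext a
    constructor
    · exact fun ha => ⟨(blk k m a, res a), ⟨ha, trivial⟩, pack_blk_res a⟩
    · rintro ⟨⟨i, r⟩, ⟨hi, -⟩, rfl⟩
      show blk k m (pack i r) ∈ T
      rwa [blk_pack]
  rw [hset, Set.ncard_image_of_injective _ finProdFinEquiv.injective, Set.ncard_prod,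
    Set.ncard_coe_finset, Set.ncard_univ, Nat.card_eq_fintype_card, Fintype.card_fin]

end BlockCoordinates

lemma ncard_isSome_eq_ncard_isSome_symm {α β : Type*} (f : α ≃. β) :
    {a | (f a).isSome}.ncard = {b | (f.symm b).isSome}.ncard :=
  Set.ncard_congr (fun a ha => (f a).get ha)
    (fun a ha => Option.isSome_iff_exists.2 ⟨a, f.mem_iff_mem.2 (Option.get_mem ha)⟩)
    (fun a b ha hb h => f.inj (Option.get_mem ha) (h ▸ Option.get_mem hb))
    (fun b hb => by
      have hmem : b ∈ f ((f.symm b).get hb) := f.mem_iff_mem.1 (Option.get_mem hb)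
      exact ⟨_, Option.isSome_iff_exists.2 ⟨b, hmem⟩, Option.get_of_mem _ hmem⟩)

def domBlocks {Ω : Type*} [Fintype Ω] {k : ℕ} (ι : Ω → Fin k) (f : Ω ≃. Ω) :
    Finset (Fin k) :=
  (Finset.univ.filter fun a => (f a).isSome).image ι

namespace PStable

variable {Ω : Type*} {k : ℕ} {ι : Ω → Fin k} {f : Ω ≃. Ω}

protected lemma symm (hf : PStable ι f) : PStable ι f.symm := by
  intro x y hxy
  obtain ⟨h_dom, h_blk, h_onto⟩ := hf y x (f.mem_iff_mem.1 hxy)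
  refine ⟨fun z hz => ?_, fun z w hw hz => ?_, fun w hw => ?_⟩
  · obtain ⟨w, -, hwz⟩ := h_onto z hz
    exact Option.isSome_iff_exists.2 ⟨w, f.mem_iff_mem.2 hwz⟩
  · obtain ⟨w', hw', hzw'⟩ := h_onto z hz
    rw [f.inj (f.mem_iff_mem.1 hw) hzw', hw']
  · obtain ⟨z, hz⟩ := Option.isSome_iff_exists.1 (h_dom w hw)
    exact ⟨z, h_blk w z hz hw, f.mem_iff_mem.2 hz⟩

lemma isSome_of_index_eq (hf : PStable ι f) {x z : Ω} (hx : (f x).isSome) (hz : ι z = ι x) :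
    (f z).isSome := by
  obtain ⟨y, hy⟩ := Option.isSome_iff_exists.1 hx
  exact (hf x y hy).1 z hz

lemma mem_domBlocks_iff [Fintype Ω] (hf : PStable ι f) (a : Ω) :
    ι a ∈ domBlocks ι f ↔ (f a).isSome := by
  simp only [domBlocks, Finset.mem_image, Finset.mem_filter, Finset.mem_univ, true_and]
  exact ⟨fun ⟨x, hx, hxa⟩ => hf.isSome_of_index_eq hx hxa.symm, fun ha => ⟨a, ha, rfl⟩⟩

lemma map_index_eq (hf : PStable ι f) {x y x' y' : Ω} (hx : x' ∈ f x) (hy : y' ∈ f y)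
    (h : ι x = ι y) : ι x' = ι y' :=
  ((hf x x' hx).2.1 y y' hy h.symm).symm

lemma index_eq_of_map_index_eq (hf : PStable ι f) {x y x' y' : Ω} (hx : x' ∈ f x)
    (hy : y' ∈ f y) (h : ι x' = ι y') : ι x = ι y :=
  hf.symm.map_index_eq (f.mem_iff_mem.2 hx) (f.mem_iff_mem.2 hy) h

lemma map_index_lt (hf : PStable ι f) (ho : POrdPres ι f) {x y x' y' : Ω} (hx : x' ∈ f x)
    (hy : y' ∈ f y) (h : ι x < ι y) : ι x' < ι y' :=
  lt_of_le_of_ne (ho x y x' y' hx hy h.le) fun he =>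
    h.ne (hf.index_eq_of_map_index_eq hx hy he)

end PStable

section Encoding

variable {k m t : ℕ}

lemma exists_eq_pack_of_blk_mem {S : Finset (Fin k)} (hS : S.card = t) {a : Fin (k * m)}
    (h : blk k m a ∈ S) : ∃ j r, a = pack (S.orderEmbOfFin hS j) r :=
  ⟨(S.orderIsoOfFin hS).symm ⟨_, h⟩, res a, by
    rw [← Finset.coe_orderIsoOfFin_apply, OrderIso.apply_symm_apply, pack_blk_res]⟩

def blockMap (S T : Finset (Fin k)) (hS : S.card = t) (hT : T.card = t)
    (σ : Fin t → Equiv.Perm (Fin m)) (a : Fin (k * m)) : Option (Fin (k * m)) :=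
  if h : blk k m a ∈ S then
    let j := (S.orderIsoOfFin hS).symm ⟨_, h⟩
    some (pack (T.orderEmbOfFin hT j) (σ j (res a)))
  else none

lemma isSome_blockMap_iff {S T : Finset (Fin k)} {hS : S.card = t} {hT : T.card = t}
    {σ : Fin t → Equiv.Perm (Fin m)} {a : Fin (k * m)} :
    (blockMap S T hS hT σ a).isSome ↔ blk k m a ∈ S := by
  unfold blockMap
  split_ifs with h <;> simp [h]

lemma mem_blockMap_iff {S T : Finset (Fin k)} {hS : S.card = t} {hT : T.card = t}
    {σ : Fin t → Equiv.Perm (Fin m)} {a b : Fin (k * m)} :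
    b ∈ blockMap S T hS hT σ a ↔
      ∃ j r, a = pack (S.orderEmbOfFin hS j) r ∧ b = pack (T.orderEmbOfFin hT j) (σ j r) := by
  constructor
  · intro hb
    have h : blk k m a ∈ S := isSome_blockMap_iff.1 (Option.isSome_iff_exists.2 ⟨b, hb⟩)
    unfold blockMap at hb
    rw [dif_pos h, Option.mem_def, Option.some_inj] at hb
    refine ⟨_, res a, ?_, hb.symm⟩
    rw [← Finset.coe_orderIsoOfFin_apply, OrderIso.apply_symm_apply, pack_blk_res]
  · rintro ⟨j, r, rfl, rfl⟩
    have h : blk k m (pack (S.orderEmbOfFin hS j) r) ∈ S := by simp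
    have hj : (S.orderIsoOfFin hS).symm ⟨_, h⟩ = j :=
      (OrderIso.symm_apply_eq _).2 (Subtype.ext (by simp))
    simp only [blockMap, dif_pos h, hj, res_pack, Option.mem_def]

abbrev BlockData (k m t : ℕ) : Type :=
  {S : Finset (Fin k) // S.card = t} × {T : Finset (Fin k) // T.card = t} ×
    (Fin t → Equiv.Perm (Fin m))

def encode : BlockData k m t → (Fin (k * m) ≃. Fin (k * m))
  | (⟨S, hS⟩, ⟨T, hT⟩, σ) =>
    { toFun := blockMap S T hS hT σ
      invFun := blockMap T S hT hS fun j => (σ j).symm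
      inv := fun a b => by
        change a ∈ blockMap T S hT hS _ b ↔ b ∈ blockMap S T hS hT σ a
        rw [mem_blockMap_iff, mem_blockMap_iff]
        constructor
        · rintro ⟨j, r, rfl, rfl⟩
          exact ⟨j, _, rfl, by rw [Equiv.apply_symm_apply]⟩
        · rintro ⟨j, r, rfl, rfl⟩
          exact ⟨j, _, rfl, by rw [Equiv.symm_apply_apply]⟩ }

variable {S T : Finset (Fin k)} {hS : S.card = t} {hT : T.card = t}
  {σ : Fin t → Equiv.Perm (Fin m)}

lemma mem_encode_iff {a b : Fin (k * m)} :
    b ∈ encode (⟨S, hS⟩, ⟨T, hT⟩, σ) a ↔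
      ∃ j r, a = pack (S.orderEmbOfFin hS j) r ∧ b = pack (T.orderEmbOfFin hT j) (σ j r) :=
  mem_blockMap_iff

lemma isSome_encode_iff {a : Fin (k * m)} :
    (encode (⟨S, hS⟩, ⟨T, hT⟩, σ) a).isSome ↔ blk k m a ∈ S :=
  isSome_blockMap_iff

lemma isSome_encode_symm_iff {b : Fin (k * m)} :
    ((encode (⟨S, hS⟩, ⟨T, hT⟩, σ)).symm b).isSome ↔ blk k m b ∈ T := by
  change (blockMap T S hT hS (fun j => (σ j).symm) b).isSome ↔ _
  exact isSome_blockMap_iff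

lemma encode_pack (j : Fin t) (r : Fin m) :
    encode (⟨S, hS⟩, ⟨T, hT⟩, σ) (pack (S.orderEmbOfFin hS j) r) =
      some (pack (T.orderEmbOfFin hT j) (σ j r)) :=
  mem_encode_iff.2 ⟨j, r, rfl, rfl⟩

lemma pStable_encode : PStable (blk k m) (encode (⟨S, hS⟩, ⟨T, hT⟩, σ)) := by
  intro x y hxy
  obtain ⟨j, r, rfl, rfl⟩ := mem_encode_iff.1 hxy
  refine ⟨fun z hz => ?_, fun z w hw hz => ?_, fun w hw => ?_⟩
  · exact isSome_encode_iff.2 (by simp [hz])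
  · obtain ⟨j', r', rfl, rfl⟩ := mem_encode_iff.1 hw
    simp only [blk_pack, OrderEmbedding.eq_iff_eq] at hz ⊢
    rw [hz]
  · simp only [blk_pack] at hw
    refine ⟨pack (S.orderEmbOfFin hS j) ((σ j).symm (res w)), by simp only [blk_pack],
      mem_encode_iff.2 ⟨j, _, rfl, ?_⟩⟩
    rw [Equiv.apply_symm_apply, ← hw, pack_blk_res]

lemma pOrdPres_encode : POrdPres (blk k m) (encode (⟨S, hS⟩, ⟨T, hT⟩, σ)) := by
  intro x y x' y' hx hy hxy
  obtain ⟨j, r, rfl, rfl⟩ := mem_encode_iff.1 hx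
  obtain ⟨j', r', rfl, rfl⟩ := mem_encode_iff.1 hy
  simpa only [blk_pack, OrderEmbedding.le_iff_le] using hxy

lemma imCard_encode : imCard (encode (⟨S, hS⟩, ⟨T, hT⟩, σ)) = t * m := by
  have himage : {b | ((encode (⟨S, hS⟩, ⟨T, hT⟩, σ)).symm b).isSome} =
      {b : Fin (k * m) | blk k m b ∈ T} :=
    Set.ext fun b => isSome_encode_symm_iff
  rw [imCard, himage, ncard_setOf_blk_mem, hT]

end Encoding

section Decoding

variable {k m t : ℕ} [NeZero m]

lemma encode_injective : Function.Injective (encode : BlockData k m t → _) := by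
  rintro ⟨⟨S, hS⟩, ⟨T, hT⟩, σ⟩ ⟨⟨S', hS'⟩, ⟨T', hT'⟩, σ'⟩ h
  obtain rfl : S = S' := Finset.ext fun i => by
    have hi : (encode (⟨S, hS⟩, ⟨T, hT⟩, σ) (pack i 0)).isSome ↔
        (encode (⟨S', hS'⟩, ⟨T', hT'⟩, σ') (pack i 0)).isSome := by rw [h]
    rwa [isSome_encode_iff, isSome_encode_iff, blk_pack] at hi
  obtain rfl : T = T' := Finset.ext fun i => by
    have hi : ((encode (⟨S, hS⟩, ⟨T, hT⟩, σ)).symm (pack i 0)).isSome ↔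
        ((encode (⟨S, hS'⟩, ⟨T', hT'⟩, σ')).symm (pack i 0)).isSome := by rw [h]
    rwa [isSome_encode_symm_iff, isSome_encode_symm_iff, blk_pack] at hi
  obtain rfl : σ = σ' := funext fun j => Equiv.ext fun r => by
    have := congrArg (fun f => f (pack (S.orderEmbOfFin hS j) r)) h
    simp only [encode_pack, Option.some_inj] at this
    exact (pack_injective this).2
  rfl

variable {α : Fin (k * m) ≃. Fin (k * m)}

lemma card_domBlocks_symm (hα : PStable (blk k m) α) (hc : imCard α = t * m) :
    (domBlocks (blk k m) α.symm).card = t := by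
  refine Nat.eq_of_mul_eq_mul_right (NeZero.pos m) ?_
  rw [← ncard_setOf_blk_mem, ← hc, imCard]
  exact congrArg Set.ncard (Set.ext fun b => hα.symm.mem_domBlocks_iff b)

lemma card_domBlocks (hα : PStable (blk k m) α) (hc : imCard α = t * m) :
    (domBlocks (blk k m) α).card = t := by
  refine Nat.eq_of_mul_eq_mul_right (NeZero.pos m) ?_
  rw [← ncard_setOf_blk_mem, ← hc, imCard, ← ncard_isSome_eq_ncard_isSome_symm]
  exact congrArg Set.ncard (Set.ext fun a => hα.mem_domBlocks_iff a)

lemma blk_eq_orderEmbOfFin_of_mem (hst : PStable (blk k m) α) (hord : POrdPres (blk k m) α)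
    (hS : (domBlocks (blk k m) α).card = t) (hT : (domBlocks (blk k m) α.symm).card = t)
    {j : Fin t} {r : Fin m} {b : Fin (k * m)}
    (hb : b ∈ α (pack ((domBlocks (blk k m) α).orderEmbOfFin hS j) r)) :
    blk k m b = (domBlocks (blk k m) α.symm).orderEmbOfFin hT j := by
  have hdom : ∀ j, (α (pack ((domBlocks (blk k m) α).orderEmbOfFin hS j) 0)).isSome :=
    fun j => (hst.mem_domBlocks_iff _).1 (by simp)
  choose g hg using fun j => Option.isSome_iff_exists.1 (hdom j)
  have hgT : ∀ j, blk k m (g j) ∈ domBlocks (blk k m) α.symm := fun j =>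
    (hst.symm.mem_domBlocks_iff _).2 (Option.isSome_iff_exists.2 ⟨_, α.mem_iff_mem.2 (hg j)⟩)
  have hmono : StrictMono fun j => blk k m (g j) := fun j j' hjj' =>
    hst.map_index_lt hord (hg j) (hg j') (by simpa using hjj')
  rw [← Finset.orderEmbOfFin_unique hT hgT hmono]
  exact hst.map_index_eq hb (hg j) (by simp)

lemma exists_encode_eq (hα : α ∈ POIkm k m) (hc : imCard α = t * m) :
    ∃ d : BlockData k m t, encode d = α := by
  obtain ⟨hst, hord⟩ := hα
  set S := domBlocks (blk k m) α
  set T := domBlocks (blk k m) α.symm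
  have hS : S.card = t := card_domBlocks hst hc
  have hT : T.card = t := card_domBlocks_symm hst hc
  have hdom : ∀ j r, (α (pack (S.orderEmbOfFin hS j) r)).isSome := fun j r =>
    (hst.mem_domBlocks_iff _).1 (by rw [blk_pack]; exact S.orderEmbOfFin_mem hS j)
  choose g hg using fun j r => Option.isSome_iff_exists.1 (hdom j r)
  have hgT : ∀ j r, pack (T.orderEmbOfFin hT j) (res (g j r)) = g j r :=
    fun j r => by rw [← blk_eq_orderEmbOfFin_of_mem hst hord hS hT (hg j r), pack_blk_res]
  have hg_inj : ∀ j, Function.Injective fun r => res (g j r) := fun j r r' h => by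
    have hgg : g j r = g j r' := by rw [← hgT j r, ← hgT j r']; exact congrArg _ h
    exact (pack_injective (α.inj (hg j r) (hgg ▸ hg j r'))).2
  refine ⟨(⟨S, hS⟩, ⟨T, hT⟩,
    fun j => Equiv.ofBijective _ (Finite.injective_iff_bijective.1 (hg_inj j))),
    PEquiv.ext fun a => Option.ext fun b => ?_⟩
  change b ∈ encode _ a ↔ b ∈ α a
  rw [mem_encode_iff]
  constructor
  · rintro ⟨j, r, rfl, rfl⟩
    rw [Equiv.ofBijective_apply, hgT]
    exact hg j r
  · intro hb
    obtain ⟨j, r, rfl⟩ := exists_eq_pack_of_blk_mem hS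
      ((hst.mem_domBlocks_iff a).2 (Option.isSome_iff_exists.2 ⟨b, hb⟩))
    exact ⟨j, r, rfl, by rw [Equiv.ofBijective_apply, hgT]; exact Option.mem_unique hb (hg j r)⟩

lemma range_encode :
    Set.range (encode : BlockData k m t → _) = {α | α ∈ POIkm k m ∧ imCard α = t * m} := by
  ext α
  constructor
  · rintro ⟨⟨⟨S, hS⟩, ⟨T, hT⟩, σ⟩, rfl⟩
    exact ⟨⟨pStable_encode, pOrdPres_encode⟩, imCard_encode⟩
  · rintro ⟨hα, hc⟩
    exact exists_encode_eq hα hc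

end Decoding

theorem stmt8_general (k m : ℕ) (hm : 2 ≤ m) (t : ℕ) :
    Set.ncard {α | α ∈ POIkm k m ∧ imCard α = t * m} =
      (k.choose t) ^ 2 * (Nat.factorial m) ^ t := by
  have : NeZero m := ⟨by omega⟩
  rw [← range_encode, ← Nat.card_coe_set_eq, Nat.card_range_of_injective encode_injective,
    Nat.card_eq_fintype_card]
  simp only [Fintype.card_prod, Fintype.card_finset_len, Fintype.card_fin, Fintype.card_fun,
    Fintype.card_perm]
  ring

/-- for `k, m ≥ 2` and `0 ≤ t ≤ k`, the `J`-class of elements of `POI_{k×m}`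
of rank `t·m` has exactly `C(k,t)² (m!)^t` elements. -/
theorem stmt8 (k m : ℕ) (hk : 2 ≤ k) (hm : 2 ≤ m) (t : ℕ) (ht : t ≤ k) :
    Set.ncard {α | α ∈ POIkm k m ∧ imCard α = t * m} =
      (k.choose t) ^ 2 * (Nat.factorial m) ^ t :=
  stmt8_general k m hm t

end POIPaper
end
end
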